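/- Let ψ₀ ∈ ℂ² be a unit spinor and define φ(x) = (1+|x|²)^{-3/2}(𝟙 + i(σ·x))ψ₀ for x ∈ ℝ³. Then |φ(x)|²_{ℂ²} = (1+|x|²)^{-2}, and in particular φ ∈ L²(ℝ³, ℂ²). -/

import Mathlib

open Matrix

/-- The Pauli matrices σ₁, σ₂, σ₃ as 2×2 complex matrices. -/
noncomputable def pauli : Fin 3 → Matrix (Fin 2) (Fin 2) ℂ :=
  ![!![0, 1; 1, 0], !![0, -Complex.I; Complex.I, 0], !![1, 0; 0, -1]]

/-- σ·z = ∑ⱼ zⱼσⱼ for a real vector z ∈ ℝ³. -/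
noncomputable def sigmaDot (z : Fin 3 → ℝ) : Matrix (Fin 2) (Fin 2) ℂ :=
  ∑ j : Fin 3, (z j : ℂ) • pauli j

/-!
σ·x is Hermitian with (σ·x)² = |x|²𝟙, so (𝟙 + iσ·x)ᴴ(𝟙 + iσ·x) = (1 + |x|²)𝟙: the matrix
𝟙 + iσ·x scales Euclidean norms by √(1 + |x|²). Hence |φ(x)|² = (1 + |x|²)^{-3}(1 + |x|²)|ψ₀|²,
and (1 + |x|²)^{-2} is integrable on ℝ³ because 4 > 3.
-/

theorem Matrix.norm_sq_toLp_mulVec_of_conjTranspose_mul_self {𝕜 m n : Type*} [RCLike 𝕜]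
    [Fintype m] [Fintype n] [DecidableEq n] {A : Matrix m n 𝕜} {c : ℝ}
    (hA : Aᴴ * A = (c : 𝕜) • 1) (v : EuclideanSpace 𝕜 n) :
    ‖WithLp.toLp 2 (A *ᵥ v.ofLp)‖ ^ 2 = c * ‖v‖ ^ 2 := by
  have hquad : star (A *ᵥ v.ofLp) ⬝ᵥ (A *ᵥ v.ofLp) = (c : 𝕜) * (star v.ofLp ⬝ᵥ v.ofLp) := by
    rw [star_mulVec, dotProduct_mulVec, vecMul_vecMul, hA, vecMul_smul, vecMul_one,
      smul_dotProduct, smul_eq_mul]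
  rw [@norm_sq_eq_re_inner 𝕜, @norm_sq_eq_re_inner 𝕜, EuclideanSpace.inner_eq_star_dotProduct,
    EuclideanSpace.inner_eq_star_dotProduct, dotProduct_comm, hquad, dotProduct_comm, RCLike.re_ofReal_mul]

theorem pauli_conjTranspose (j : Fin 3) : (pauli j)ᴴ = pauli j := by
  fin_cases j <;> ext i k <;> fin_cases i <;> fin_cases k <;> simp [pauli]

theorem sigmaDot_conjTranspose (z : Fin 3 → ℝ) : (sigmaDot z)ᴴ = sigmaDot z := by
  simp [sigmaDot, conjTranspose_sum, conjTranspose_smul, pauli_conjTranspose]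

theorem sigmaDot_mul_self (z : Fin 3 → ℝ) :
    sigmaDot z * sigmaDot z = ((∑ j, z j ^ 2 : ℝ) : ℂ) • 1 := by
  ext i k
  fin_cases i <;> fin_cases k <;>
    simp [sigmaDot, pauli, Fin.sum_univ_three, mul_apply, Fin.sum_univ_two] <;>
    ring_nf <;> simp [Complex.I_sq]

theorem conjTranspose_mul_self_one_add_I_smul_sigmaDot (z : Fin 3 → ℝ) :
    (1 + Complex.I • sigmaDot z)ᴴ * (1 + Complex.I • sigmaDot z) =
      ((1 + ∑ j, z j ^ 2 : ℝ) : ℂ) • 1 := by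
  rw [conjTranspose_add, conjTranspose_one, conjTranspose_smul, sigmaDot_conjTranspose,
    Complex.star_def, Complex.conj_I]
  simp only [add_mul, mul_add, one_mul, mul_one, smul_mul_assoc, mul_smul_comm, smul_smul,
    sigmaDot_mul_self]
  match_scalars
  · linear_combination (-∑ j, (z j : ℂ) ^ 2) * Complex.I_sq
  · ring

noncomputable def lossYauMode (ψ₀ : EuclideanSpace ℂ (Fin 2)) (x : EuclideanSpace ℝ (Fin 3)) :
    EuclideanSpace ℂ (Fin 2) :=
  ((1 + ‖x‖ ^ 2) ^ (-(3 : ℝ) / 2) : ℝ) •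
    WithLp.toLp 2 ((1 + Complex.I • sigmaDot x.ofLp) *ᵥ ψ₀.ofLp)

theorem norm_sq_lossYauMode (ψ₀ : EuclideanSpace ℂ (Fin 2)) (x : EuclideanSpace ℝ (Fin 3)) :
    ‖lossYauMode ψ₀ x‖ ^ 2 = (1 + ‖x‖ ^ 2) ^ (-(2 : ℝ)) * ‖ψ₀‖ ^ 2 := by
  have hpos : 0 < 1 + ‖x‖ ^ 2 := by positivity
  have hspinor : ‖WithLp.toLp 2 ((1 + Complex.I • sigmaDot x.ofLp) *ᵥ ψ₀.ofLp)‖ ^ 2 =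
      (1 + ‖x‖ ^ 2) * ‖ψ₀‖ ^ 2 := by
    rw [EuclideanSpace.real_norm_sq_eq]
    exact norm_sq_toLp_mulVec_of_conjTranspose_mul_self
      (conjTranspose_mul_self_one_add_I_smul_sigmaDot x.ofLp) ψ₀
  have hscalar : ((1 + ‖x‖ ^ 2) ^ (-(3 : ℝ) / 2)) ^ 2 * (1 + ‖x‖ ^ 2) =
      (1 + ‖x‖ ^ 2) ^ (-(2 : ℝ)) := by
    rw [← Real.rpow_natCast, ← Real.rpow_mul hpos.le, ← Real.rpow_add_one hpos.ne']
    norm_num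
  rw [lossYauMode, norm_smul, mul_pow, hspinor, Real.norm_of_nonneg (by positivity), ← mul_assoc,
    hscalar]

theorem continuous_lossYauMode (ψ₀ : EuclideanSpace ℂ (Fin 2)) : Continuous (lossYauMode ψ₀) := by
  have hσ : Continuous sigmaDot := by unfold sigmaDot; fun_prop
  unfold lossYauMode
  refine .smul (.rpow_const (by fun_prop) fun x => .inl (by positivity)) ?_
  fun_prop

/-- The Loss–Yau zero mode: for a unit spinor ψ₀ and
φ(x) = (1+|x|²)^{-3/2}(𝟙 + i σ·x)ψ₀ one has |φ(x)|² = (1+|x|²)^{-2};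
in particular φ ∈ L²(ℝ³, ℂ²). -/
theorem loss_yau_zero_mode
    (ψ₀ : EuclideanSpace ℂ (Fin 2)) (hψ₀ : ‖ψ₀‖ = 1)
    (φ : EuclideanSpace ℝ (Fin 3) → EuclideanSpace ℂ (Fin 2))
    (hφ : ∀ x, φ x =
      ((1 + ‖x‖ ^ 2) ^ (-(3 : ℝ) / 2) : ℝ) •
        (WithLp.equiv 2 (Fin 2 → ℂ)).symm
          (((1 : Matrix (Fin 2) (Fin 2) ℂ) + Complex.I • sigmaDot (fun j => x j)).mulVec
            (WithLp.equiv 2 (Fin 2 → ℂ) ψ₀))) :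
    (∀ x, ‖φ x‖ ^ 2 = (1 + ‖x‖ ^ 2) ^ (-(2 : ℝ))) ∧
      MeasureTheory.MemLp φ 2 MeasureTheory.volume := by
  obtain rfl : φ = lossYauMode ψ₀ := funext hφ
  have hnorm (x : EuclideanSpace ℝ (Fin 3)) :
      ‖lossYauMode ψ₀ x‖ ^ 2 = (1 + ‖x‖ ^ 2) ^ (-(2 : ℝ)) := by
    rw [norm_sq_lossYauMode, hψ₀, one_pow, mul_one]
  refine ⟨hnorm, ?_⟩
  rw [MeasureTheory.memLp_two_iff_integrable_sq_norm
    (continuous_lossYauMode ψ₀).aestronglyMeasurable, funext hnorm, show (-2 : ℝ) = -4 / 2 by norm_num]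
  exact integrable_rpow_neg_one_add_norm_sq (by norm_num)
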